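/- If u = p/q with p, q positive coprime integers and p* + q* is odd, then the set E_u = E + uE contains a nonempty open interval and E_u is the closure of its interior. -/

import Mathlib

open MeasureTheory

/-- The Cantor-like set `E = {∑_{j=1}^∞ ε_j 4^{-j} : ε_j ∈ {0,1}}`. -/
def E : Set ℝ :=
  {x | ∃ ε : ℕ → ℝ, (∀ j, ε j = 0 ∨ ε j = 1) ∧ x = ∑' j : ℕ, ε j / 4 ^ (j + 1)}

/-- `E_u = E + u·E`. -/
def Eu (u : ℝ) : Set ℝ := {z | ∃ x ∈ E, ∃ y ∈ E, z = x + u * y}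

/-- `n* `: the first nonzero digit from the right of `n` in base `b`,
i.e. `(n / b^{j*}) % b` where `j*` is the largest `j` with `b^j ∣ n`. -/
def fstDigit (b n : ℕ) : ℕ := n / b ^ padicValNat b n % b

/-
Write `u = p / q`. The set `S = E + u • E` satisfies `4 • S = D + S` with `D = {0, 1, u, 1 + u}`,
so every point of `S` lies in arbitrarily small copies `(c + S) / 4 ^ n ⊆ S`; the copies of an
interior point are interior, hence `S` is the closure of its interior as soon as it has one.

For the interior, write `p = 4 ^ k * p₀` and `q = 4 ^ l * q₀` with `4 ∤ p₀, q₀`; since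
`E ⊆ 4 • E`, the set `q • S = q • E + p • E` contains `T = q₀ • E + p₀ • E`. When `p* + q*` is
odd, one of `p₀, q₀` is `2` and the other is odd mod 4, so the digits `{0, p₀, q₀, p₀ + q₀}` of
`T` form a complete residue system mod 4. Then the closed set `T + ℤ` contains `ℤ` and is stable
under `x ↦ x / 4`, so it contains all `k / 4 ^ n` and is all of `ℝ`; by Baire some integer
translate of `T` has interior.
-/

open Set
open scoped Pointwise

lemma abs_div_four_pow_le {e : ℝ} (he : e = 0 ∨ e = 1) (j : ℕ) :
    |e / 4 ^ (j + 1)| ≤ (1 / 4) ^ j := by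
  rcases he with rfl | rfl
  · simp
  · rw [abs_of_pos (by positivity), one_div_pow]
    gcongr <;> norm_num

lemma summable_digits {ε : ℕ → ℝ} (hε : ∀ j, ε j = 0 ∨ ε j = 1) :
    Summable fun j => ε j / 4 ^ (j + 1) :=
  .of_norm_bounded (summable_geometric_of_lt_one (by norm_num) (by norm_num))
    fun j => abs_div_four_pow_le (hε j) j

lemma four_mul_tsum_digits {ε : ℕ → ℝ} (hε : ∀ j, ε j = 0 ∨ ε j = 1) :
    4 * ∑' j, ε j / 4 ^ (j + 1) = ε 0 + ∑' j, ε (j + 1) / 4 ^ (j + 1) := by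
  rw [(summable_digits hε).tsum_eq_zero_add]
  simp only [pow_succ _ (_ + 1), ← div_div, tsum_div_const]
  ring

lemma isCompact_E : IsCompact E := by
  have hE : E = (fun ε : ℕ → ℝ => ∑' j, ε j / 4 ^ (j + 1)) '' univ.pi fun _ => {0, 1} := by
    ext x
    simp [E, eq_comm]
  rw [hE]
  refine (isCompact_univ_pi fun _ => ((finite_singleton 1).insert 0).isCompact)
    |>.image_of_continuousOn ?_
  refine continuousOn_tsum (fun j => ((continuous_apply j).div_const _).continuousOn)
    (summable_geometric_of_lt_one (by norm_num) (by norm_num))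
    fun j ε hε => abs_div_four_pow_le (hε j (mem_univ j)) j

lemma four_smul_E : (4 : ℝ) • E = {0, 1} + E := by
  ext x
  simp only [mem_smul_set, mem_add, mem_insert_iff, mem_singleton_iff, smul_eq_mul]
  constructor
  · rintro ⟨-, ⟨ε, hε, rfl⟩, rfl⟩
    exact ⟨ε 0, hε 0, _, ⟨fun j => ε (j + 1), fun j => hε _, rfl⟩, (four_mul_tsum_digits hε).symm⟩
  · rintro ⟨e, he, -, ⟨ε, hε, rfl⟩, rfl⟩
    let ε' : ℕ → ℝ := fun | 0 => e | j + 1 => ε j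
    have hε' : ∀ j, ε' j = 0 ∨ ε' j = 1 := fun | 0 => he | j + 1 => hε j
    exact ⟨_, ⟨ε', hε', rfl⟩, four_mul_tsum_digits hε'⟩

lemma zero_mem_E : (0 : ℝ) ∈ E := ⟨fun _ => 0, fun _ => Or.inl rfl, by simp⟩

lemma E_subset_four_pow_smul_E (k : ℕ) : E ⊆ (4 : ℝ) ^ k • E := by
  induction k with
  | zero => simp
  | succ k ih =>
    calc E ⊆ (4 : ℝ) ^ k • E := ih
      _ ⊆ (4 : ℝ) ^ k • (4 : ℝ) • E := smul_set_mono (four_smul_E ▸ subset_add_right E (by simp))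
      _ = (4 : ℝ) ^ (k + 1) • E := by rw [smul_smul, pow_succ]

lemma natCast_smul_E_subset (m k : ℕ) : (m : ℝ) • E ⊆ ((4 ^ k * m : ℕ) : ℝ) • E := by
  calc (m : ℝ) • E ⊆ (m : ℝ) • (4 : ℝ) ^ k • E := smul_set_mono (E_subset_four_pow_smul_E k)
    _ = ((4 ^ k * m : ℕ) : ℝ) • E := by rw [smul_smul]; congr 1; push_cast; ring

section SelfSimilar

variable {D S : Set ℝ}

lemma exists_pow_smul_eq_add {b : ℝ} (hS : b • S = D + S) (n : ℕ) :
    ∃ C : Set ℝ, b ^ n • S = C + S := by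
  induction n with
  | zero => exact ⟨0, by simp⟩
  | succ n ih =>
    obtain ⟨C, hC⟩ := ih
    exact ⟨b • C + D, by rw [pow_succ', mul_smul, hC, smul_add, hS, add_assoc]⟩

lemma subset_closure_interior_of_smul_eq_add {b : ℝ} (hb : 1 < b) (hSb : Bornology.IsBounded S)
    (hS : b • S = D + S) (hint : (interior S).Nonempty) : S ⊆ closure (interior S) := by
  obtain ⟨z, hz⟩ := hint
  obtain ⟨R, hR⟩ := hSb.exists_norm_le
  intro t ht
  rw [Metric.mem_closure_iff]
  intro r hr
  obtain ⟨n, hn⟩ := pow_unbounded_of_one_lt (2 * R / r) hb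
  obtain ⟨C, hC⟩ := exists_pow_smul_eq_add hS n
  have hbn : 0 < b ^ n := pow_pos (by linarith) n
  obtain ⟨c, hc, y, hy, hcy⟩ : ∃ c ∈ C, ∃ y ∈ S, c + y = b ^ n * t := by
    rw [← mem_add, ← hC]
    exact smul_mem_smul_set ht
  -- `t` lies in the copy `(c + S) / b ^ n ⊆ S`, in which `(c + z) / b ^ n` is interior
  have hcopy : (fun w => b ^ n * w - c) ⁻¹' S ⊆ S := fun w hw => by
    rw [← smul_mem_smul_set_iff₀ hbn.ne', hC]
    exact ⟨c, hc, _, hw, by rw [smul_eq_mul]; ring⟩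
  refine ⟨(c + z) / b ^ n, interior_mono hcopy
    (preimage_interior_subset_interior_preimage (by fun_prop) ?_), ?_⟩
  · simpa [mul_div_cancel₀ _ hbn.ne'] using hz
  · have hyz : |y - z| ≤ 2 * R := by
      have hy' : |y| ≤ R := hR y hy
      have hz' : |z| ≤ R := hR z (interior_subset hz)
      linarith [abs_sub y z]
    have : t - (c + z) / b ^ n = (y - z) / b ^ n := by
      field_simp
      linarith
    rw [Real.dist_eq, this, abs_div, abs_of_pos hbn, div_lt_iff₀ hbn]
    rw [div_lt_iff₀ hr] at hn
    linarith

lemma exists_intCast_add_mem_of_add_subset_smul {b : ℝ} (hb : 1 < b) (hSc : IsCompact S)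
    (h0 : 0 ∈ S) (hS : D + S ⊆ b • S)
    (hD : ∀ k : ℤ, ∃ d ∈ D, ∃ m : ℤ, (k : ℝ) = d + b * m) (x : ℝ) :
    ∃ k : ℤ, x + k ∈ S := by
  set U := S + range ((↑) : ℤ → ℝ)
  have hU : IsClosed U := Real.isClosed_range_intCast.add_left_of_isCompact hSc
  have hb0 : 0 < b := by linarith
  have hdiv : ∀ y ∈ U, y / b ∈ U := by
    rintro - ⟨s, hs, -, ⟨k, rfl⟩, rfl⟩
    obtain ⟨d, hd, m, hk⟩ := hD k
    obtain ⟨s', hs', hs'eq⟩ := hS (add_mem_add hd hs)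
    refine ⟨s', hs', m, ⟨m, rfl⟩, ?_⟩
    dsimp only [smul_eq_mul] at hs'eq ⊢
    field_simp
    linarith
  have hdyadic : ∀ n : ℕ, ∀ k : ℤ, (k : ℝ) / b ^ n ∈ U := by
    intro n
    induction n with
    | zero => exact fun k => ⟨0, h0, k, ⟨k, rfl⟩, by simp⟩
    | succ n ih => exact fun k => by rw [pow_succ, ← div_div]; exact hdiv _ (ih k)
  have hx : x ∈ U := by
    rw [← hU.closure_eq, Metric.mem_closure_iff]
    intro r hr
    obtain ⟨n, hn⟩ := pow_unbounded_of_one_lt (1 / r) hb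
    have hB : 0 < b ^ n := by positivity
    refine ⟨⌊x * b ^ n⌋ / b ^ n, hdyadic n _, ?_⟩
    have h1 := Int.floor_le (x * b ^ n)
    have h2 := Int.lt_floor_add_one (x * b ^ n)
    have : x - ⌊x * b ^ n⌋ / b ^ n = (x * b ^ n - ⌊x * b ^ n⌋) / b ^ n := by field_simp
    rw [Real.dist_eq, this, abs_of_nonneg (by apply div_nonneg <;> linarith), div_lt_iff₀ hB]
    rw [div_lt_iff₀ hr] at hn
    linarith
  obtain ⟨s, hs, -, ⟨k, rfl⟩, hsx⟩ := hx
  exact ⟨-k, by rw [← hsx]; simpa⟩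

lemma interior_nonempty_of_forall_exists_intCast_add_mem (hSc : IsClosed S)
    (h : ∀ x : ℝ, ∃ k : ℤ, x + k ∈ S) : (interior S).Nonempty := by
  obtain ⟨k, y, hy⟩ := nonempty_interior_of_iUnion_of_closed
    (fun k : ℤ => hSc.preimage (continuous_add_const (k : ℝ))) (iUnion_eq_univ_iff.2 h)
  rw [show (· + (k : ℝ)) ⁻¹' S = Homeomorph.addRight (k : ℝ) ⁻¹' S from rfl,
    ← Homeomorph.preimage_interior] at hy
  exact ⟨_, hy⟩

end SelfSimilar

lemma isCompact_smul_E_add_smul_E (a c : ℝ) : IsCompact (a • E + c • E) :=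
  (isCompact_E.smul a).add (isCompact_E.smul c)

lemma four_smul_smul_E_add_smul_E (a c : ℝ) :
    (4 : ℝ) • (a • E + c • E) = (a • {0, 1} + c • {0, 1}) + (a • E + c • E) := by
  rw [smul_add, smul_comm (4 : ℝ) a, smul_comm (4 : ℝ) c, four_smul_E, smul_add, smul_add,
    add_add_add_comm]

lemma exists_intCast_eq_digit_add_four_mul {m m' : ℕ} (hm : m % 4 ≠ 0) (hm' : m' % 4 ≠ 0)
    (hodd : Odd (m % 4 + m' % 4)) (k : ℤ) :
    ∃ d ∈ (m : ℝ) • ({0, 1} : Set ℝ) + (m' : ℝ) • {0, 1}, ∃ j : ℤ, (k : ℝ) = d + 4 * j := by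
  have hk : k % 4 = 0 ∨ k % 4 = 1 ∨ k % 4 = 2 ∨ k % 4 = 3 := by omega
  have hmm' : m % 4 = 2 ∧ (m' % 4 = 1 ∨ m' % 4 = 3) ∨
      m' % 4 = 2 ∧ (m % 4 = 1 ∨ m % 4 = 3) := by
    obtain ⟨t, ht⟩ := hodd
    omega
  obtain ⟨e, e', he, he', j, hj⟩ : ∃ e e' : ℤ, (e = 0 ∨ e = 1) ∧ (e' = 0 ∨ e' = 1) ∧
      (4 : ℤ) ∣ k - (m * e + m' * e') := by
    rcases hmm' with ⟨h, h' | h'⟩ | ⟨h, h' | h'⟩ <;> rcases hk with hk | hk | hk | hk <;>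
      first
      | exact ⟨0, 0, by simp, by simp, by omega⟩
      | exact ⟨0, 1, by simp, by simp, by omega⟩
      | exact ⟨1, 0, by simp, by simp, by omega⟩
      | exact ⟨1, 1, by simp, by simp, by omega⟩
  have hmem : ∀ e : ℤ, e = 0 ∨ e = 1 → (e : ℝ) ∈ ({0, 1} : Set ℝ) := by
    rintro e (rfl | rfl) <;> simp
  have hk' : k = m * e + m' * e' + 4 * j := by linarith
  exact ⟨m * e + m' * e', add_mem_add (smul_mem_smul_set (hmem e he))
    (smul_mem_smul_set (hmem e' he')), j, by exact_mod_cast hk'⟩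

lemma interior_natCast_smul_E_add_smul_E_nonempty {m m' : ℕ} (hm : m % 4 ≠ 0)
    (hm' : m' % 4 ≠ 0) (hodd : Odd (m % 4 + m' % 4)) :
    (interior ((m : ℝ) • E + (m' : ℝ) • E)).Nonempty :=
  interior_nonempty_of_forall_exists_intCast_add_mem
    (isCompact_smul_E_add_smul_E _ _).isClosed
    (exists_intCast_add_mem_of_add_subset_smul (by norm_num) (isCompact_smul_E_add_smul_E _ _)
      ⟨0, zero_mem_smul_set zero_mem_E, 0, zero_mem_smul_set zero_mem_E, add_zero 0⟩
      (four_smul_smul_E_add_smul_E _ _).ge (exists_intCast_eq_digit_add_four_mul hm hm' hodd))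

lemma exists_eq_pow_mul_fstDigit {b n : ℕ} (hb : 1 < b) (hn : n ≠ 0) :
    ∃ k m, n = b ^ k * m ∧ fstDigit b n = m % b ∧ m % b ≠ 0 := by
  have hdiv : n / b ^ padicValNat b n = Nat.divMaxPow n b :=
    Nat.div_eq_of_eq_mul_right (by positivity) (Nat.pow_padicValNat_mul_divMaxPow b n).symm
  refine ⟨padicValNat b n, Nat.divMaxPow n b, (Nat.pow_padicValNat_mul_divMaxPow b n).symm,
    by rw [fstDigit, hdiv], fun h => Nat.not_dvd_divMaxPow hb hn (Nat.dvd_of_mod_eq_zero h)⟩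

lemma Eu_eq_add_smul (u : ℝ) : Eu u = E + u • E := by
  ext z
  simp only [Eu, mem_add, mem_smul_set, smul_eq_mul]
  constructor
  · rintro ⟨x, hx, y, hy, rfl⟩
    exact ⟨x, hx, _, ⟨y, hy, rfl⟩, rfl⟩
  · rintro ⟨x, hx, -, ⟨y, hy, rfl⟩, rfl⟩
    exact ⟨x, hx, y, hy, rfl⟩

lemma interior_Eu_div_nonempty {p q : ℕ} (hp : 0 < p) (hq : 0 < q)
    (hodd : Odd (fstDigit 4 p + fstDigit 4 q)) : (interior (Eu ((p : ℝ) / q))).Nonempty := by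
  obtain ⟨k, p₀, hpk, hfp, hp₀⟩ := exists_eq_pow_mul_fstDigit (b := 4) (by norm_num) hp.ne'
  obtain ⟨l, q₀, hql, hfq, hq₀⟩ := exists_eq_pow_mul_fstDigit (b := 4) (by norm_num) hq.ne'
  have hq0 : (q : ℝ) ≠ 0 := by positivity
  have hsub : (q₀ : ℝ) • E + (p₀ : ℝ) • E ⊆ (q : ℝ) • Eu ((p : ℝ) / q) := by
    rw [Eu_eq_add_smul, smul_add, smul_smul, mul_div_cancel₀ _ hq0, hpk, hql]
    exact add_subset_add (natCast_smul_E_subset q₀ l) (natCast_smul_E_subset p₀ k)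
  have := (interior_natCast_smul_E_add_smul_E_nonempty hq₀ hp₀
    (by rwa [add_comm, ← hfp, ← hfq])).mono (interior_mono hsub)
  rwa [interior_smul₀ hq0, smul_set_nonempty] at this

theorem Eu_closure_interior_of_odd_sum_general (p q : ℕ) (hp : 0 < p) (hq : 0 < q)
    (hodd : Odd (fstDigit 4 p + fstDigit 4 q)) :
    (∃ a b : ℝ, a < b ∧ Set.Ioo a b ⊆ Eu ((p : ℝ) / q)) ∧
      Eu ((p : ℝ) / q) = closure (interior (Eu ((p : ℝ) / q))) := by
  set u := (p : ℝ) / q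
  have hint : (interior (Eu u)).Nonempty := interior_Eu_div_nonempty hp hq hodd
  have hcompact : IsCompact (Eu u) := by
    simpa [Eu_eq_add_smul] using isCompact_smul_E_add_smul_E 1 u
  have hself : (4 : ℝ) • Eu u = ({0, 1} + u • {0, 1}) + Eu u := by
    simpa [Eu_eq_add_smul] using four_smul_smul_E_add_smul_E 1 u
  refine ⟨?_, (subset_closure_interior_of_smul_eq_add (by norm_num) hcompact.isBounded hself
    hint).antisymm (closure_minimal interior_subset hcompact.isClosed)⟩
  obtain ⟨z, hz⟩ := hint
  obtain ⟨a, b, ⟨haz, hzb⟩, hab⟩ :=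
    mem_nhds_iff_exists_Ioo_subset.1 (mem_interior_iff_mem_nhds.1 hz)
  exact ⟨a, b, haz.trans hzb, hab⟩

/-- If `u = p/q` with `p, q` positive coprime integers and `p* + q*` odd, then `E_u`
contains a nonempty open interval and `E_u` is the closure of its interior. -/
theorem Eu_closure_interior_of_odd_sum (p q : ℕ) (hp : 0 < p) (hq : 0 < q)
    (hpq : Nat.Coprime p q) (hodd : Odd (fstDigit 4 p + fstDigit 4 q)) :
    (∃ a b : ℝ, a < b ∧ Set.Ioo a b ⊆ Eu ((p : ℝ) / q)) ∧
      Eu ((p : ℝ) / q) = closure (interior (Eu ((p : ℝ) / q))) :=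
  Eu_closure_interior_of_odd_sum_general p q hp hq hodd
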